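/- Let r ≥ 0, m ≥ 1, n ≥ 1 be integers and let a_1, a_2, … be complex numbers. Then Σ_{1 ≤ k_m ≤ ⋯ ≤ k_1 ≤ n} a_{k_1+r} a_{k_2+r} ⋯ a_{k_m+r} = Σ_{i+j=m, i,j ≥ 0} (−1)^i · Ā_i(r) · A_j(n+r), where Ā_q(N) = Σ_{1 ≤ k_q < ⋯ < k_1 ≤ N} a_{k_1}⋯a_{k_q} and A_q(N) = Σ_{1 ≤ k_q ≤ ⋯ ≤ k_1 ≤ N} a_{k_1}⋯a_{k_q}. -/

import Mathlib

/-!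
Put `H_N = ∑_q A_q(N) X^q` and `E_N = ∑_q (-1)^q Ā_q(N) X^q = ∏_{k ≤ N} (1 - a_k X)`.
Splitting off the top index gives `(1 - a_{N+1} X) H_{N+1} = H_N` and
`E_{N+1} = (1 - a_{N+1} X) E_N`, so `E_N H_N = 1` by induction. The same recursion,
after cancelling the unit `1 - a_k X`, shows that the series of the shifted sequence is
`E_r H_{n+r}`; the identity is its coefficient of `X^m`.
-/

open Finset

/-- Multiple harmonic number `ζ_n({1}_m)`:
`ζ_n({1}_m) = ∑_{n ≥ n₁ > n₂ > ⋯ > n_m ≥ 1} 1/(n₁ ⋯ n_m)`, with `ζ_n({1}_0) = 1`. -/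
noncomputable def mhn : ℕ → ℕ → ℝ
  | _, 0 => 1
  | n, m + 1 => ∑ k ∈ Finset.Icc 1 n, mhn (k - 1) m / (k : ℝ)

/-- Multiple harmonic star number `ζ_n^⋆({1}_m)`:
`ζ_n^⋆({1}_m) = ∑_{n ≥ n₁ ≥ n₂ ≥ ⋯ ≥ n_m ≥ 1} 1/(n₁ ⋯ n_m)`, with `ζ_n^⋆({1}_0) = 1`. -/
noncomputable def mhsn : ℕ → ℕ → ℝ
  | _, 0 => 1
  | n, m + 1 => ∑ k ∈ Finset.Icc 1 n, mhsn k m / (k : ℝ)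

/-- Multiple harmonic number with repeated real argument `p`: `ζ_n({p}_m)`. -/
noncomputable def mhnP (p : ℝ) : ℕ → ℕ → ℝ
  | _, 0 => 1
  | n, m + 1 => ∑ k ∈ Finset.Icc 1 n, mhnP p (k - 1) m / (k : ℝ) ^ p

/-- Multiple harmonic star number with repeated real argument `p`: `ζ_n^⋆({p}_m)`. -/
noncomputable def mhsnP (p : ℝ) : ℕ → ℕ → ℝ
  | _, 0 => 1
  | n, m + 1 => ∑ k ∈ Finset.Icc 1 n, mhsnP p k m / (k : ℝ) ^ p

/-- Generalized harmonic number `H_n^{(p)} = ∑_{j=1}^n 1/j^p`. -/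
noncomputable def genH (p n : ℕ) : ℝ := ∑ j ∈ Finset.Icc 1 n, 1 / (j : ℝ) ^ p

/-- Auxiliary: `hypAux m n k = h_n^{(m+1)}(k)` for `k ≥ 1` (peel off the weak outer indices). -/
noncomputable def hypAux : ℕ → ℕ → ℕ → ℝ
  | 0, n, k => mhn n k
  | m + 1, n, k => ∑ j ∈ Finset.Icc 1 n, hypAux m j k

/-- Generalized hyperharmonic number `h_n^{(m)}(k)`, with the convention
`h_n^{(m)}(0) = C(m+n-1, m-1)`. -/
noncomputable def gh (n m k : ℕ) : ℝ :=
  if k = 0 then (Nat.choose (m + n - 1) (m - 1) : ℝ) else hypAux (m - 1) n k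

/-- Unsigned Stirling number of the first kind, defined by the standard recurrence,
equivalently by `x(x+1)⋯(x+n-1) = ∑_{k=0}^n [n; k] xᵏ`. -/
def stir1 : ℕ → ℕ → ℕ
  | 0, 0 => 1
  | 0, _ + 1 => 0
  | _ + 1, 0 => 0
  | n + 1, k + 1 => stir1 n k + n * stir1 n (k + 1)

/-- Multiple zeta value `ζ(p, {1}_m)`. -/
noncomputable def mzv (p m : ℕ) : ℝ := ∑' n : ℕ, mhn n m / (n + 1 : ℝ) ^ p

/-- Multiple zeta star value `ζ^⋆(p, {1}_m)`. -/
noncomputable def mzvStar (p m : ℕ) : ℝ := ∑' n : ℕ, mhsn (n + 1) m / (n + 1 : ℝ) ^ p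

/-- Riemann zeta value `ζ(p) = ∑_{n=1}^∞ 1/n^p`. -/
noncomputable def rz (p : ℕ) : ℝ := ∑' n : ℕ, 1 / (n + 1 : ℝ) ^ p

/-- `U_{m,r}(p) = ∑_{n=1}^∞ ζ_{n+r}({1}_m)/n^p`. -/
noncomputable def Usum (m r p : ℕ) : ℝ := ∑' n : ℕ, mhn (n + 1 + r) m / (n + 1 : ℝ) ^ p

/-- Strictly decreasing `q`-fold sum `Ā_q(n) = ∑_{1 ≤ k_q < ⋯ < k₁ ≤ n} a_{k₁}⋯a_{k_q}`,
with `Ā_0(n) = 1` (so `Ā_q(n) = 0` when `n < q`). -/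
def sdSum {R : Type*} [Semiring R] (a : ℕ → R) : ℕ → ℕ → R
  | _, 0 => 1
  | n, q + 1 => ∑ k ∈ Finset.Icc 1 n, a k * sdSum a (k - 1) q

/-- Weakly decreasing `q`-fold sum `A_q(n) = ∑_{1 ≤ k_q ≤ ⋯ ≤ k₁ ≤ n} a_{k₁}⋯a_{k_q}`,
with `A_0(n) = 1`. -/
def wdSum {R : Type*} [Semiring R] (a : ℕ → R) : ℕ → ℕ → R
  | _, 0 => 1
  | n, q + 1 => ∑ k ∈ Finset.Icc 1 n, a k * wdSum a k q

open PowerSeries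

section Semiring

variable {R : Type*} [Semiring R] (a : ℕ → R)

theorem sdSum_succ_succ (n q : ℕ) :
    sdSum a (n + 1) (q + 1) = sdSum a n (q + 1) + a (n + 1) * sdSum a n q := by
  simp only [sdSum, sum_Icc_succ_top (Nat.le_add_left 1 n), add_tsub_cancel_right]

theorem wdSum_succ_succ (n q : ℕ) :
    wdSum a (n + 1) (q + 1) = wdSum a n (q + 1) + a (n + 1) * wdSum a (n + 1) q := by
  simp only [wdSum, sum_Icc_succ_top (Nat.le_add_left 1 n)]

end Semiring

section CommRing

variable {R : Type*} [CommRing R] (a : ℕ → R)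

def wdSeries (N : ℕ) : R⟦X⟧ := mk (wdSum a N)

def altSdSeries (N : ℕ) : R⟦X⟧ := mk fun q => (-1) ^ q * sdSum a N q

theorem wdSeries_zero : wdSeries a 0 = 1 := by
  ext (_ | q) <;> simp [wdSeries, wdSum]

theorem altSdSeries_zero : altSdSeries a 0 = 1 := by
  ext (_ | q) <;> simp [altSdSeries, sdSum]

theorem one_sub_C_mul_X_mul_wdSeries_succ (N : ℕ) :
    (1 - C (a (N + 1)) * X) * wdSeries a (N + 1) = wdSeries a N := by
  ext (_ | q)
  · simp [wdSeries, wdSum]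
  · simp only [wdSeries, sub_mul, one_mul, mul_assoc, map_sub, coeff_C_mul, coeff_succ_X_mul,
      coeff_mk, wdSum_succ_succ]
    ring

theorem altSdSeries_succ (N : ℕ) :
    altSdSeries a (N + 1) = (1 - C (a (N + 1)) * X) * altSdSeries a N := by
  ext (_ | q)
  · simp [altSdSeries, sdSum]
  · simp only [altSdSeries, sub_mul, one_mul, mul_assoc, map_sub, coeff_C_mul, coeff_succ_X_mul,
      coeff_mk, sdSum_succ_succ]
    ring

theorem altSdSeries_mul_wdSeries (N : ℕ) : altSdSeries a N * wdSeries a N = 1 := by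
  induction N with
  | zero => rw [altSdSeries_zero, wdSeries_zero, one_mul]
  | succ N ih =>
    rw [altSdSeries_succ, mul_comm (1 - _), mul_assoc, one_sub_C_mul_X_mul_wdSeries_succ, ih]

theorem isUnit_one_sub_C_mul_X (c : R) : IsUnit (1 - C c * X : R⟦X⟧) := by
  simp [isUnit_iff_constantCoeff]

theorem wdSeries_shift_eq (r n : ℕ) :
    wdSeries (fun k => a (k + r)) n = altSdSeries a r * wdSeries a (n + r) := by
  induction n with
  | zero => rw [zero_add, altSdSeries_mul_wdSeries, wdSeries_zero]
  | succ n ih =>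
    apply (isUnit_one_sub_C_mul_X (a (n + 1 + r))).mul_left_cancel
    rw [one_sub_C_mul_X_mul_wdSeries_succ (fun k => a (k + r)), ih, mul_left_comm,
      add_right_comm, one_sub_C_mul_X_mul_wdSeries_succ]

end CommRing

theorem shifted_wdSum_eq_general (r m n : ℕ) (a : ℕ → ℂ) :
    wdSum (fun k => a (k + r)) n m =
      ∑ i ∈ Finset.range (m + 1), (-1 : ℂ) ^ i * sdSum a r i * wdSum a (n + r) (m - i) := by
  have h := congrArg (coeff m) (wdSeries_shift_eq a r n)
  simpa only [wdSeries, altSdSeries, coeff_mk, coeff_mul,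
    Nat.sum_antidiagonal_eq_sum_range_succ (fun i j => (-1) ^ i * sdSum a r i * wdSum a (n + r) j)]
    using h

/-- Remark 2.1, weak version: for `r ≥ 0`, `m, n ≥ 1`,
`∑_{1 ≤ k_m ≤ ⋯ ≤ k₁ ≤ n} a_{k₁+r}⋯a_{k_m+r} = ∑_{i+j=m} (-1)^i Ā_i(r) A_j(n+r)`. -/
theorem shifted_wdSum_eq (r m n : ℕ) (hm : 1 ≤ m) (hn : 1 ≤ n) (a : ℕ → ℂ) :
    wdSum (fun k => a (k + r)) n m =
      ∑ i ∈ Finset.range (m + 1), (-1 : ℂ) ^ i * sdSum a r i * wdSum a (n + r) (m - i) :=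
  shifted_wdSum_eq_general r m n a
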